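/- Let G₁, …, G_p (p ≥ 2) be nonempty connected interval graphs and let G be the graph obtained from the disjoint union G₁ ⊔ ⋯ ⊔ G_p by adding one new vertex w adjacent to all of their vertices. Then ν(G) = min over pairs of distinct indices s ≠ t of max({ν((G_s)_β), ν((G_t)_β)} ∪ {ν(G_i) + 1 : i ∉ {s, t}}). -/

import Mathlib

open Set

/-- An interval representation of a simple graph `G`: each vertex `v` gets a nonempty
closed interval `[l v, r v] ⊆ ℝ`, and two distinct vertices are adjacent iff their
intervals intersect. -/
structure IntervalRep {V : Type*} (G : SimpleGraph V) where
  l : V → ℝ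
  r : V → ℝ
  le : ∀ v, l v ≤ r v
  adj_iff : ∀ u v : V, u ≠ v →
    (G.Adj u v ↔ (Icc (l u) (r u) ∩ Icc (l v) (r v)).Nonempty)

namespace IntervalRep

variable {V : Type*} {G : SimpleGraph V}

/-- The interval of a vertex. -/
def itv (R : IntervalRep G) (v : V) : Set ℝ := Icc (R.l v) (R.r v)

/-- The nesting `ν(R)`: the maximum length of a chain of strictly nested vertex intervals. -/
noncomputable def nesting (R : IntervalRep G) : ℕ :=
  sSup {k : ℕ | ∃ f : Fin k → V, ∀ i j : Fin k, i < j → R.itv (f i) ⊂ R.itv (f j)}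

/-- `ν_R(x)`: the maximum length of a chain of strictly nested vertex intervals whose
outermost interval is `I(x)` (counting `x` itself). -/
noncomputable def nuAt (R : IntervalRep G) (x : V) : ℕ :=
  sSup {k : ℕ | ∃ f : Fin k → V,
    (∀ i j : Fin k, i < j → R.itv (f i) ⊂ R.itv (f j)) ∧
    ∃ h : 0 < k, f ⟨k - 1, by omega⟩ = x}

end IntervalRep

/-- A graph is an interval graph if it admits an interval representation. -/
def IsIntervalGraph {V : Type*} (G : SimpleGraph V) : Prop := Nonempty (IntervalRep G)

/-- The nesting number `ν(G)`: the minimum nesting over all interval representations. -/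
noncomputable def nu {V : Type*} (G : SimpleGraph V) : ℕ :=
  sInf {n : ℕ | ∃ R : IntervalRep G, R.nesting = n}

/-- `G_α`: add vertices `u, a₁, a₂, b₁, b₂` (coded as `0,1,2,3,4`), with `u` adjacent to all
of `G` and to `a₁, b₁`; `a₁ ~ a₂` and `b₁ ~ b₂`. -/
def Galpha {V : Type*} (G : SimpleGraph V) : SimpleGraph (V ⊕ Fin 5) :=
  SimpleGraph.fromRel fun x y =>
    match x, y with
    | Sum.inl a, Sum.inl b => G.Adj a b
    | Sum.inl _, Sum.inr i => i = 0
    | Sum.inr _, Sum.inl _ => False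
    | Sum.inr i, Sum.inr j =>
        i = 0 ∧ j = 1 ∨ i = 1 ∧ j = 2 ∨ i = 0 ∧ j = 3 ∨ i = 3 ∧ j = 4

/-- `G_β`: add vertices `u, a₁, a₂` (coded as `0,1,2`), with `u` adjacent to all of `G`
and to `a₁`; `a₁ ~ a₂`. -/
def Gbeta {V : Type*} (G : SimpleGraph V) : SimpleGraph (V ⊕ Fin 3) :=
  SimpleGraph.fromRel fun x y =>
    match x, y with
    | Sum.inl a, Sum.inl b => G.Adj a b
    | Sum.inl _, Sum.inr i => i = 0
    | Sum.inr _, Sum.inl _ => False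
    | Sum.inr i, Sum.inr j => i = 0 ∧ j = 1 ∨ i = 1 ∧ j = 2

/-- `G_γ`: add vertices `u, v, a₁, a₂, b₁, b₂` (coded as `0,1,2,3,4,5`), with `u ~ v`, both
adjacent to all of `G`; `u ~ a₁`, `a₁ ~ a₂`, `v ~ b₁`, `b₁ ~ b₂`. -/
def Ggamma {V : Type*} (G : SimpleGraph V) : SimpleGraph (V ⊕ Fin 6) :=
  SimpleGraph.fromRel fun x y =>
    match x, y with
    | Sum.inl a, Sum.inl b => G.Adj a b
    | Sum.inl _, Sum.inr i => i = 0 ∨ i = 1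
    | Sum.inr _, Sum.inl _ => False
    | Sum.inr i, Sum.inr j =>
        i = 0 ∧ j = 1 ∨ i = 0 ∧ j = 2 ∨ i = 2 ∧ j = 3 ∨ i = 1 ∧ j = 4 ∨ i = 4 ∧ j = 5

/-- The disjoint union of a family of graphs, on the sigma type of their vertex sets. -/
def sigmaGraph {p : ℕ} {V : Fin p → Type*} (G : ∀ i, SimpleGraph (V i)) :
    SimpleGraph (Σ i, V i) :=
  SimpleGraph.fromRel fun x y => ∃ h : x.1 = y.1, (G y.1).Adj (h ▸ x.2) y.2

/-- The graph obtained from `H` by adding one new vertex adjacent to every vertex of `H`. -/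
def joinVertex {W : Type*} (H : SimpleGraph W) : SimpleGraph (W ⊕ Unit) :=
  SimpleGraph.fromRel fun x y =>
    match x, y with
    | Sum.inl a, Sum.inl b => H.Adj a b
    | Sum.inl _, Sum.inr _ => True
    | _, _ => False


/-!
Fix an interval representation of the cone `G` over `G₁ ⊔ ⋯ ⊔ G_p` with apex `w`. Intervals of
different components are disjoint and all meet `I(w)`. If a component has an interval starting
left of `I(w)`, then by connectivity its intervals cover everything up to where they end, so they
all end before the point where another component touches `I(w)`. Restricted to that component
and `w`, and with `a₁, a₂` attached right of `I(w)`, this gives a representation of `(G_i)_β`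
of no larger nesting. At most one component sticks out on each side and none on both; every
other component lies strictly inside `I(w)` and yields a chain of length `ν(G_i) + 1`.

Conversely, take optimal representations of `(G_s)_β` and `(G_t)_β`, restricted to the component
and `u` and reflected where needed, and of the other `G_i` with an apex interval around
everything. Squeeze each into its own window with `x ↦ 4 · rank i + arctan x`, `s` leftmost and
`t` rightmost, and let `I(w)` run from the apex of `s` to the apex of `t`. A chain then lies in a
single component plus `w`, and an interval of component `i` lies in `I(w)` exactly when it lies
in the apex interval of `i`.
-/

open Sum

section Intervals

variable {α β : Type*} [LinearOrder α] [LinearOrder β] {a b c d : α}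

lemma Icc_inter_Icc_nonempty_iff (hab : a ≤ b) (hcd : c ≤ d) :
    (Icc a b ∩ Icc c d).Nonempty ↔ a ≤ d ∧ c ≤ b := by
  rw [Icc_inter_Icc, nonempty_Icc, max_le_iff, le_min_iff, le_min_iff]
  exact ⟨fun h => ⟨h.1.2, h.2.1⟩, fun h => ⟨⟨hab, h.1⟩, h.2, hcd⟩⟩

lemma Icc_ssubset_Icc_iff (hab : a ≤ b) :
    Icc a b ⊂ Icc c d ↔ c ≤ a ∧ b ≤ d ∧ (c < a ∨ b < d) := by
  rw [ssubset_iff_subset_ne, Icc_subset_Icc_iff hab, Ne, Icc_eq_Icc_iff hab]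
  constructor
  · rintro ⟨⟨hca, hbd⟩, hne⟩
    refine ⟨hca, hbd, ?_⟩
    by_contra! h
    exact hne ⟨le_antisymm h.1 hca, le_antisymm hbd h.2⟩
  · rintro ⟨hca, hbd, h⟩
    refine ⟨⟨hca, hbd⟩, fun he => ?_⟩
    rcases h with h | h
    exacts [h.ne he.1.symm, h.ne he.2]

lemma StrictMono.Icc_inter_Icc_nonempty_iff {φ : α → β} (hφ : StrictMono φ) (hab : a ≤ b)
    (hcd : c ≤ d) :
    (Icc (φ a) (φ b) ∩ Icc (φ c) (φ d)).Nonempty ↔ (Icc a b ∩ Icc c d).Nonempty := by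
  rw [_root_.Icc_inter_Icc_nonempty_iff (hφ.monotone hab) (hφ.monotone hcd),
    _root_.Icc_inter_Icc_nonempty_iff hab hcd, hφ.le_iff_le, hφ.le_iff_le]

lemma StrictMono.Icc_ssubset_Icc_iff {φ : α → β} (hφ : StrictMono φ) (hab : a ≤ b) :
    Icc (φ a) (φ b) ⊂ Icc (φ c) (φ d) ↔ Icc a b ⊂ Icc c d := by
  rw [_root_.Icc_ssubset_Icc_iff (hφ.monotone hab), _root_.Icc_ssubset_Icc_iff hab,
    hφ.le_iff_le, hφ.le_iff_le, hφ.lt_iff_lt, hφ.lt_iff_lt]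

lemma four_mul_add_arctan_lt {m n : ℕ} (h : m < n) (x y : ℝ) :
    4 * (m : ℝ) + Real.arctan x < 4 * n + Real.arctan y := by
  have hmn : (m : ℝ) + 1 ≤ n := by exact_mod_cast h
  linarith [Real.arctan_lt_pi_div_two x, Real.neg_pi_div_two_lt_arctan y, Real.pi_lt_four]

end Intervals

namespace IntervalRep

variable {V W : Type*} {G : SimpleGraph V} {H : SimpleGraph W}

lemma itv_nonempty (R : IntervalRep G) (v : V) : (R.itv v).Nonempty :=
  nonempty_Icc.2 (R.le v)

lemma adj_iff_itv (R : IntervalRep G) {u v : V} (huv : u ≠ v) :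
    G.Adj u v ↔ (R.itv u ∩ R.itv v).Nonempty :=
  R.adj_iff u v huv

lemma bddAbove_chainLengths [Finite V] (R : IntervalRep G) :
    BddAbove {k : ℕ | ∃ f : Fin k → V, ∀ i j : Fin k, i < j → R.itv (f i) ⊂ R.itv (f j)} := by
  refine ⟨Nat.card V, ?_⟩
  rintro k ⟨f, hf⟩
  have hinj : Function.Injective (R.itv ∘ f) :=
    StrictMono.injective (f := R.itv ∘ f) fun i j h => hf i j h
  simpa using Nat.card_le_card_of_injective f hinj.of_comp

lemma le_nesting [Finite V] (R : IntervalRep G) {k : ℕ} {f : Fin k → V}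
    (hf : StrictMono (R.itv ∘ f)) : k ≤ R.nesting :=
  le_csSup R.bddAbove_chainLengths ⟨f, fun _ _ h => hf h⟩

lemma exists_chain_length_nesting [Finite V] (R : IntervalRep G) :
    ∃ f : Fin R.nesting → V, StrictMono (R.itv ∘ f) := by
  obtain ⟨f, hf⟩ := Nat.sSup_mem (s := {k : ℕ | ∃ f : Fin k → V,
    ∀ i j : Fin k, i < j → R.itv (f i) ⊂ R.itv (f j)}) ⟨0, Fin.elim0, fun i => i.elim0⟩
    R.bddAbove_chainLengths
  exact ⟨f, fun i j h => hf i j h⟩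

lemma nesting_le (R : IntervalRep G) {n : ℕ}
    (h : ∀ k (f : Fin k → V), StrictMono (R.itv ∘ f) → k ≤ n) : R.nesting ≤ n :=
  csSup_le ⟨0, Fin.elim0, fun i => i.elim0⟩ fun k ⟨f, hf⟩ => h k f fun i j hij => hf i j hij

lemma succ_le_nesting [Finite V] (R : IntervalRep G) {k : ℕ} {f : Fin k → V}
    (hf : StrictMono (R.itv ∘ f)) {z : V} (hz : ∀ i, R.itv (f i) ⊂ R.itv z) :
    k + 1 ≤ R.nesting := by
  refine R.le_nesting (f := Fin.snoc (α := fun _ => V) f z) fun a b hab => ?_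
  induction b using Fin.lastCases with
  | last =>
    induction a using Fin.lastCases with
    | last => exact absurd hab (lt_irrefl _)
    | cast a => simpa using hz a
  | cast b =>
    induction a using Fin.lastCases with
    | last => exact absurd hab (not_lt.2 (Fin.le_last _))
    | cast a => simpa using hf (Fin.castSucc_lt_castSucc_iff.1 hab)

lemma nesting_le_nesting_of_map [Finite W] (R : IntervalRep G) (S : IntervalRep H) (φ : V → W)
    (hφ : ∀ x y, R.itv x ⊂ R.itv y → S.itv (φ x) ⊂ S.itv (φ y)) : R.nesting ≤ S.nesting :=
  R.nesting_le fun _ f hf => S.le_nesting (f := φ ∘ f) fun _ _ h => hφ _ _ (hf h)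

lemma isClique_range (R : IntervalRep G) {k : ℕ} {f : Fin k → V}
    (hf : StrictMono (R.itv ∘ f)) : G.IsClique (range f) := by
  have hmeet : ∀ i j, i < j → (R.itv (f i) ∩ R.itv (f j)).Nonempty := fun i j h =>
    (R.itv_nonempty _).mono (subset_inter subset_rfl (hf h).subset)
  rintro _ ⟨i, rfl⟩ _ ⟨j, rfl⟩ hne
  rcases lt_or_gt_of_ne (ne_of_apply_ne f hne) with h | h
  · exact (R.adj_iff _ _ hne).2 (hmeet i j h)
  · exact ((R.adj_iff _ _ hne.symm).2 (hmeet j i h)).symm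

def comap (R : IntervalRep G) (e : H ↪g G) : IntervalRep H where
  l := R.l ∘ e
  r := R.r ∘ e
  le v := R.le (e v)
  adj_iff u v huv := by
    rw [← e.map_adj_iff]
    exact R.adj_iff _ _ (e.injective.ne huv)

lemma nesting_comap_le [Finite V] (R : IntervalRep G) (e : H ↪g G) :
    (R.comap e).nesting ≤ R.nesting :=
  nesting_le_nesting_of_map _ _ e fun _ _ h => h

def reflect (R : IntervalRep G) : IntervalRep G where
  l v := -R.r v
  r v := -R.l v
  le v := neg_le_neg (R.le v)
  adj_iff u v huv := by
    rw [R.adj_iff u v huv, ← neg_Icc, ← neg_Icc, ← inter_neg, nonempty_neg]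

lemma reflect_itv (R : IntervalRep G) (v : V) : R.reflect.itv v = -R.itv v :=
  (neg_Icc _ _).symm

@[simp] lemma reflect_reflect (R : IntervalRep G) : R.reflect.reflect = R := by
  cases R
  simp [reflect]

lemma nesting_reflect_le [Finite V] (R : IntervalRep G) : R.reflect.nesting ≤ R.nesting :=
  nesting_le_nesting_of_map _ _ id fun x y h => by
    rw [reflect_itv, reflect_itv, ssubset_iff_subset_not_subset, neg_subset_neg,
      neg_subset_neg] at h
    exact ssubset_iff_subset_not_subset.2 h

def map (R : IntervalRep G) (φ : ℝ → ℝ) (hφ : StrictMono φ) : IntervalRep G where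
  l := φ ∘ R.l
  r := φ ∘ R.r
  le v := hφ.monotone (R.le v)
  adj_iff u v huv := by
    rw [R.adj_iff u v huv]
    exact (hφ.Icc_inter_Icc_nonempty_iff (R.le u) (R.le v)).symm

lemma exists_mem_itv_of_walk (R : IntervalRep G) {a b : V} (w : G.Walk a b) {x y z : ℝ}
    (hx : x ∈ R.itv a) (hy : y ∈ R.itv b) (hz : z ∈ Icc x y) : ∃ c, z ∈ R.itv c := by
  induction w generalizing x with
  | nil => exact ⟨_, ordConnected_Icc.out hx hy hz⟩
  | @cons u _ _ hadj w ih =>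
    by_cases hzr : z ≤ R.r u
    · exact ⟨_, hx.1.trans hz.1, hzr⟩
    · obtain ⟨m, hm, hm'⟩ := (R.adj_iff _ _ hadj.ne).1 hadj
      exact ih hm' hy ⟨hm.2.trans (not_le.1 hzr).le, hz.2⟩

lemma ordConnected_iUnion_itv (R : IntervalRep G) (hG : G.Preconnected) :
    (⋃ v, R.itv v).OrdConnected := by
  refine ⟨fun x hx y hy z hz => ?_⟩
  obtain ⟨a, ha⟩ := mem_iUnion.1 hx
  obtain ⟨b, hb⟩ := mem_iUnion.1 hy
  obtain ⟨w⟩ := hG a b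
  exact mem_iUnion.2 (R.exists_mem_itv_of_walk w ha hb hz)

lemma forall_r_lt_or_forall_lt_l (R : IntervalRep G) (hG : G.Preconnected) {x : ℝ}
    (hx : ∀ v, x ∉ R.itv v) : (∀ v, R.r v < x) ∨ (∀ v, x < R.l v) := by
  by_contra! h
  obtain ⟨⟨a, ha⟩, b, hb⟩ := h
  have hxa : x < R.l a := lt_of_not_ge fun h => hx a ⟨h, ha⟩
  have hbx : R.r b < x := lt_of_not_ge fun h => hx b ⟨hb, h⟩
  obtain ⟨c, hc⟩ := mem_iUnion.1 <| (R.ordConnected_iUnion_itv hG).out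
    (mem_iUnion.2 ⟨b, R.le b, le_rfl⟩) (mem_iUnion.2 ⟨a, le_rfl, R.le a⟩) ⟨hbx.le, hxa.le⟩
  exact hx c hc

end IntervalRep

lemma nu_le_nesting {V : Type*} {G : SimpleGraph V} (R : IntervalRep G) : nu G ≤ R.nesting :=
  Nat.sInf_le ⟨R, rfl⟩

lemma IsIntervalGraph.exists_nesting_eq_nu {V : Type*} {G : SimpleGraph V}
    (h : IsIntervalGraph G) : ∃ R : IntervalRep G, R.nesting = nu G :=
  Nat.sInf_mem (s := {n : ℕ | ∃ R : IntervalRep G, R.nesting = n})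
    (h.elim fun R => ⟨R.nesting, R, rfl⟩)

section Graphs

variable {W W' : Type*} {H : SimpleGraph W} {H' : SimpleGraph W'}

@[simp] lemma joinVertex_adj_inl_inl {a b : W} :
    (joinVertex H).Adj (inl a) (inl b) ↔ H.Adj a b := by
  simp only [joinVertex, SimpleGraph.fromRel_adj, ne_eq, inl.injEq]
  exact ⟨fun h => h.2.elim id .symm, fun h => ⟨h.ne, .inl h⟩⟩

@[simp] lemma joinVertex_adj_inl_inr {a : W} {u : Unit} :
    (joinVertex H).Adj (inl a) (inr u) := by
  simp [joinVertex]

@[simp] lemma joinVertex_adj_inr_inl {a : W} {u : Unit} :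
    (joinVertex H).Adj (inr u) (inl a) :=
  joinVertex_adj_inl_inr.symm

def joinVertex.inlEmb : H ↪g joinVertex H :=
  ⟨⟨inl, inl_injective⟩, joinVertex_adj_inl_inl⟩

def joinVertex.map (e : H ↪g H') : joinVertex H ↪g joinVertex H' :=
  ⟨⟨Sum.map e id, Sum.map_injective.2 ⟨e.injective, Function.injective_id⟩⟩, by
    rintro (a | a) (b | b) <;> simp⟩

variable {U : Type*} {K : SimpleGraph U}

@[simp] lemma Gbeta_adj_inl_inl {a b : U} : (Gbeta K).Adj (inl a) (inl b) ↔ K.Adj a b := by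
  simp only [Gbeta, SimpleGraph.fromRel_adj, ne_eq, inl.injEq]
  exact ⟨fun h => h.2.elim id .symm, fun h => ⟨h.ne, .inl h⟩⟩

@[simp] lemma Gbeta_adj_inl_inr {a : U} {i : Fin 3} :
    (Gbeta K).Adj (inl a) (inr i) ↔ i = 0 := by
  simp [Gbeta]

def Gbeta.apexEmb : joinVertex K ↪g Gbeta K :=
  ⟨⟨Sum.map id fun _ => 0, Sum.map_injective.2 ⟨Function.injective_id, fun _ _ _ => rfl⟩⟩, by
    rintro (a | a) (b | b) <;> simp [(Gbeta K).adj_comm (inr _) (inl _)]⟩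

variable {p : ℕ} {V : Fin p → Type*} {G : ∀ i, SimpleGraph (V i)}

@[simp] lemma sigmaGraph_adj_mk_mk {i : Fin p} {v w : V i} :
    (sigmaGraph G).Adj ⟨i, v⟩ ⟨i, w⟩ ↔ (G i).Adj v w := by
  simp only [sigmaGraph, SimpleGraph.fromRel_adj, ne_eq, Sigma.mk.inj_iff, heq_eq_eq,
    true_and, exists_const]
  exact ⟨fun h => h.2.elim id .symm, fun h => ⟨h.ne, .inl h⟩⟩

lemma sigmaGraph_not_adj_of_ne {i j : Fin p} (hij : i ≠ j) (v : V i) (w : V j) :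
    ¬ (sigmaGraph G).Adj ⟨i, v⟩ ⟨j, w⟩ := by
  simp only [sigmaGraph, SimpleGraph.fromRel_adj]
  rintro ⟨-, ⟨h, -⟩ | ⟨h, -⟩⟩
  exacts [hij h, hij h.symm]

def sigmaGraph.mkEmb (i : Fin p) : G i ↪g sigmaGraph G :=
  ⟨⟨Sigma.mk i, sigma_mk_injective⟩, sigmaGraph_adj_mk_mk⟩

variable (G) in
def coneEmb (i : Fin p) : joinVertex (G i) ↪g joinVertex (sigmaGraph G) :=
  joinVertex.map (sigmaGraph.mkEmb i)

lemma exists_subset_range_coneEmb_of_isClique [Nonempty (Fin p)]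
    {S : Set ((Σ i, V i) ⊕ Unit)} (hS : (joinVertex (sigmaGraph G)).IsClique S) :
    ∃ i, S ⊆ range (coneEmb G i) := by
  by_cases h : ∃ i v, inl ⟨i, v⟩ ∈ S
  · obtain ⟨i, v, hv⟩ := h
    refine ⟨i, ?_⟩
    rintro (⟨j, w⟩ | ⟨⟩) hx
    · obtain rfl : j = i := by
        by_contra hji
        have hadj := hS hx hv (by simp [hji])
        exact sigmaGraph_not_adj_of_ne hji w v (joinVertex_adj_inl_inl.1 hadj)
      exact ⟨inl w, rfl⟩
    · exact ⟨inr (), rfl⟩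
  · simp only [not_exists] at h
    refine ⟨Classical.arbitrary _, ?_⟩
    rintro (⟨j, w⟩ | ⟨⟩) hx
    · exact absurd hx (h j w)
    · exact ⟨inr (), rfl⟩

end Graphs

namespace IntervalRep

section Cone

variable {U : Type*} [Finite U] {K : SimpleGraph U} (P : IntervalRep (joinVertex K))

lemma nesting_comap_inl_add_one_le (h : ∀ v, P.itv (inl v) ⊂ P.itv (inr ())) :
    (P.comap joinVertex.inlEmb).nesting + 1 ≤ P.nesting := by
  obtain ⟨f, hf⟩ := (P.comap joinVertex.inlEmb).exists_chain_length_nesting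
  exact P.succ_le_nesting (f := inl ∘ f) hf fun i => h (f i)

lemma nesting_le_nesting_comap_inl_add_one (h : ∀ x, ¬ P.itv (inr ()) ⊂ P.itv x) :
    P.nesting ≤ (P.comap joinVertex.inlEmb).nesting + 1 := by
  refine P.nesting_le fun k f hf => ?_
  cases k with
  | zero => omega
  | succ k =>
    have hbelow : ∀ i : Fin k, ∃ v, f i.castSucc = inl v := by
      intro i
      rcases hfi : f i.castSucc with v | ⟨⟩
      · exact ⟨v, rfl⟩
      · have := hf (Fin.castSucc_lt_last i)
        simp only [Function.comp_apply, hfi] at this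
        exact absurd this (h _)
    choose g hg using hbelow
    have hg' : StrictMono ((P.comap joinVertex.inlEmb).itv ∘ g) := fun i j hij => by
      show P.itv (inl (g i)) ⊂ P.itv (inl (g j))
      rw [← hg, ← hg]
      exact hf (Fin.castSucc_lt_castSucc_iff.2 hij)
    have := (P.comap joinVertex.inlEmb).le_nesting hg'
    omega

end Cone

variable {U : Type*} {K : SimpleGraph U}

def withApex (R : IntervalRep K) (a b : ℝ) (hab : a ≤ b)
    (hmeet : ∀ v, (R.itv v ∩ Icc a b).Nonempty) : IntervalRep (joinVertex K) where
  l := Sum.elim R.l fun _ => a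
  r := Sum.elim R.r fun _ => b
  le := by
    rintro (v | _)
    exacts [R.le v, hab]
  adj_iff := by
    rintro (u | ⟨⟩) (v | ⟨⟩) huv
    · simpa using R.adj_iff u v (by simpa using huv)
    · simpa [itv] using hmeet u
    · simpa [itv, inter_comm] using hmeet v
    · exact absurd rfl huv

lemma exists_cone_rep [Finite U] (R : IntervalRep K) :
    ∃ P : IntervalRep (joinVertex K), (∀ v, P.l (inr ()) < P.l (inl v)) ∧
      (∀ v, P.r (inl v) < P.r (inr ())) ∧ P.nesting ≤ R.nesting + 1 := by
  obtain ⟨c, hc⟩ := (finite_range fun v => max |R.l v| |R.r v|).bddAbove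
  have hbound : ∀ v, -(|c| + 1) < R.l v ∧ R.r v < |c| + 1 := fun v => by
    have hv := (hc ⟨v, rfl⟩).trans (le_abs_self c)
    have hl := (abs_le.1 ((le_max_left _ _).trans hv)).1
    have hr := (abs_le.1 ((le_max_right _ _).trans hv)).2
    constructor <;> linarith
  have hsub : ∀ v, R.itv v ⊆ Icc (-(|c| + 1)) (|c| + 1) := fun v =>
    Icc_subset_Icc (hbound v).1.le (hbound v).2.le
  set P := R.withApex _ _ (by linarith [abs_nonneg c]) fun v =>
    ⟨R.l v, left_mem_Icc.2 (R.le v), hsub v (left_mem_Icc.2 (R.le v))⟩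
  refine ⟨P, fun v => (hbound v).1, fun v => (hbound v).2,
    P.nesting_le_nesting_comap_inl_add_one fun x hx => ?_⟩
  rcases x with v | ⟨⟩
  · exact (hx.trans_subset (hsub v)).ne rfl
  · exact hx.ne rfl

section Beta

variable (P : IntervalRep (joinVertex K)) (hP : ∀ v, P.r (inl v) < P.r (inr ()))

def extendBeta : IntervalRep (Gbeta K) where
  l := Sum.elim (P.l ∘ inl) ![P.l (inr ()), P.r (inr ()), P.r (inr ()) + 1]
  r := Sum.elim (P.r ∘ inl) ![P.r (inr ()), P.r (inr ()) + 1, P.r (inr ()) + 2]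
  le := by
    rintro (v | i)
    · exact P.le (inl v)
    · fin_cases i <;> simp [P.le (inr ())]
  adj_iff := by
    have hu := P.le (inr ())
    have hpend : ∀ a, ∀ i : Fin 3, i ≠ 0 → ¬ (Icc (P.l (inl a)) (P.r (inl a)) ∩
        Icc (![P.l (inr ()), P.r (inr ()), P.r (inr ()) + 1] i)
          (![P.r (inr ()), P.r (inr ()) + 1, P.r (inr ()) + 2] i)).Nonempty := by
      rintro a i hi ⟨x, hxa, hxi⟩
      have := hP a
      fin_cases i <;> simp at hi hxi <;> linarith [hxa.2, hxi.1]
    rintro (a | i) (b | j) hne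
    · simpa using P.adj_iff (inl a) (inl b) (by simpa using hne)
    · rcases eq_or_ne j 0 with rfl | hj
      · simpa using (P.adj_iff (inl a) (inr ()) (by simp)).1 (by simp)
      · simpa [hj] using hpend a j hj
    · rcases eq_or_ne i 0 with rfl | hi
      · simpa [inter_comm, (Gbeta K).adj_comm (inr _)] using
          (P.adj_iff (inl b) (inr ()) (by simp)).1 (by simp)
      · simpa [hi, inter_comm, (Gbeta K).adj_comm (inr _)] using hpend b i hi
    · fin_cases i <;> fin_cases j <;> simp_all [Gbeta, Icc_inter_Icc]

/-- With `c` the right end of `I(u)`, the pendant intervals `[c, c + 1]` and `[c + 1, c + 2]`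
are comparable with no other interval, so every chain maps to a chain of `P`. -/
lemma nesting_extendBeta_le [Finite U] [Nonempty U] :
    (P.extendBeta hP).nesting ≤ P.nesting := by
  have hlu : P.l (inr ()) < P.r (inr ()) := by
    obtain ⟨v⟩ := ‹Nonempty U›
    obtain ⟨x, hxv, hxu⟩ := (P.adj_iff (inl v) (inr ()) (by simp)).1 (by simp)
    linarith [hxu.1, hxv.2, hP v]
  have hends : ∀ x y, (P.extendBeta hP).itv x ⊂ (P.extendBeta hP).itv y →
      (P.extendBeta hP).l y ≤ (P.extendBeta hP).l x ∧
        (P.extendBeta hP).r x ≤ (P.extendBeta hP).r y :=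
    fun x y h => (Icc_subset_Icc_iff ((P.extendBeta hP).le x)).1 h.subset
  refine nesting_le_nesting_of_map _ _ (Sum.elim inl fun _ => inr ()) ?_
  rintro (a | i) (b | j) h
  · exact h
  · fin_cases j
    · exact h
    all_goals
      have := hends _ _ h
      simp [extendBeta] at this
      linarith [hP a, P.le (inl a)]
  · fin_cases i
    · exact h
    all_goals
      have := hends _ _ h
      simp [extendBeta] at this
      linarith [hP b, P.le (inl b)]
  · fin_cases i <;> fin_cases j
    all_goals first
      | exact absurd h (ssubset_irrefl _)
      | have := hends _ _ h
        simp [extendBeta] at this <;> linarith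

end Beta

/-- `I(a₁)` meets `I(u)` but no interval of the connected graph `K`, so all of `K` lies on one
side of a point of `I(u)`; reflect if it is the left side. -/
lemma exists_cone_rep_of_Gbeta [Finite U] (hK : K.Preconnected) (Rβ : IntervalRep (Gbeta K)) :
    ∃ P : IntervalRep (joinVertex K), (∀ v, P.r (inl v) < P.r (inr ())) ∧
      P.nesting ≤ Rβ.nesting := by
  obtain ⟨x, hxu, hxa⟩ := (Rβ.adj_iff (inr 0) (inr 1) (by simp)).1 (by simp [Gbeta])
  have hx : ∀ v, x ∉ ((Rβ.comap Gbeta.apexEmb).comap joinVertex.inlEmb).itv v := fun v hv => by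
    simpa using (Rβ.adj_iff (inl v) (inr 1) (by simp)).2 ⟨x, hv, hxa⟩
  rcases forall_r_lt_or_forall_lt_l _ hK hx with h | h
  · exact ⟨Rβ.comap Gbeta.apexEmb, fun v => (h v).trans_le hxu.2, nesting_comap_le _ _⟩
  · exact ⟨Rβ.reflect.comap Gbeta.apexEmb, fun v => neg_lt_neg (hxu.1.trans_lt (h v)),
      (nesting_comap_le _ _).trans Rβ.nesting_reflect_le⟩

end IntervalRep

section Beta

variable {U : Type*} [Finite U] {K : SimpleGraph U}

lemma nu_Gbeta_le_nesting [Nonempty U] (P : IntervalRep (joinVertex K))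
    (hP : ∀ v, P.r (inl v) < P.r (inr ())) : nu (Gbeta K) ≤ P.nesting :=
  (nu_le_nesting _).trans (P.nesting_extendBeta_le hP)

lemma IsIntervalGraph.nu_Gbeta_le [Nonempty U] (h : IsIntervalGraph K) :
    nu (Gbeta K) ≤ nu K + 1 := by
  obtain ⟨R, hR⟩ := h.exists_nesting_eq_nu
  obtain ⟨P, -, hP, hPR⟩ := R.exists_cone_rep
  exact (nu_Gbeta_le_nesting P hP).trans (hR ▸ hPR)

lemma IsIntervalGraph.Gbeta (h : IsIntervalGraph K) : IsIntervalGraph (Gbeta K) := by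
  obtain ⟨R⟩ := h
  obtain ⟨P, -, hP, -⟩ := R.exists_cone_rep
  exact ⟨P.extendBeta hP⟩

end Beta

section Cones

variable {p : ℕ} {V : Fin p → Type*} {G : ∀ i, SimpleGraph (V i)}

def IntervalRep.sigma (Q : ∀ i, IntervalRep (G i))
    (hQ : ∀ i j, i ≠ j → ∀ v w, Disjoint ((Q i).itv v) ((Q j).itv w)) :
    IntervalRep (sigmaGraph G) where
  l x := (Q x.1).l x.2
  r x := (Q x.1).r x.2
  le x := (Q x.1).le x.2
  adj_iff := by
    rintro ⟨i, v⟩ ⟨j, w⟩ hne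
    rcases eq_or_ne i j with rfl | hij
    · simpa using (Q i).adj_iff v w (by simpa using hne)
    · exact iff_of_false (sigmaGraph_not_adj_of_ne hij v w)
        (not_nonempty_iff_eq_empty.2 (hQ i j hij v w).inter_eq)

/-- A chain is a clique, so it lies in the cone over a single component. -/
theorem IntervalRep.nesting_le_of_cones [Nonempty (Fin p)] [∀ i, Finite (V i)]
    (R : IntervalRep (joinVertex (sigmaGraph G))) (P : ∀ i, IntervalRep (joinVertex (G i)))
    (hP : ∀ i x y, R.itv (coneEmb G i x) ⊂ R.itv (coneEmb G i y) → (P i).itv x ⊂ (P i).itv y)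
    {n : ℕ} (hn : ∀ i, (P i).nesting ≤ n) : R.nesting ≤ n := by
  refine R.nesting_le fun k f hf => ?_
  obtain ⟨i, hi⟩ := exists_subset_range_coneEmb_of_isClique (R.isClique_range hf)
  obtain ⟨g, rfl⟩ := range_subset_range_iff_exists_comp.1 hi
  exact ((P i).le_nesting fun a b hab => hP i _ _ (hf hab)).trans (hn i)

lemma exists_rank {s t : Fin p} (hst : s ≠ t) :
    ∃ rank : Fin p → ℕ, Function.Injective rank ∧ (∀ i ≠ s, rank s < rank i) ∧
      (∀ i ≠ t, rank i < rank t) := by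
  refine ⟨fun i => if i = s then 0 else if i = t then p + 1 else i + 1, ?_, ?_, ?_⟩
  · intro i j h
    simp only at h
    split_ifs at h <;> omega
  · intro i hi
    simp only [hi, if_true, if_false]
    split_ifs <;> omega
  · intro i hi
    simp only [hi, hst.symm, if_true, if_false]
    split_ifs <;> omega

/-- Component `i` is squeezed by `4 * rank i + arctan` into a window of width `π` around
`4 * rank i`, and the apex runs from the apex of `P s` to the apex of `P t`. -/
theorem exists_rep_of_cones [∀ i, Finite (V i)] {s t : Fin p} (hst : s ≠ t)
    (P : ∀ i, IntervalRep (joinVertex (G i)))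
    (hright : ∀ i ≠ t, ∀ v, (P i).r (inl v) < (P i).r (inr ()))
    (hleft : ∀ i ≠ s, ∀ v, (P i).l (inr ()) < (P i).l (inl v)) :
    ∃ R : IntervalRep (joinVertex (sigmaGraph G)),
      ∀ i x y, R.itv (coneEmb G i x) ⊂ R.itv (coneEmb G i y) → (P i).itv x ⊂ (P i).itv y := by
  obtain ⟨rank, hinj, hs, ht⟩ := exists_rank hst
  let φ : Fin p → ℝ → ℝ := fun i x => 4 * (rank i : ℝ) + Real.arctan x
  have hφ : ∀ i, StrictMono (φ i) := fun i => Real.arctan_strictMono.const_add _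
  have hsep : ∀ i j, rank i < rank j → ∀ x y, φ i x < φ j y := fun i j h =>
    four_mul_add_arctan_lt h
  let Q : ∀ i, IntervalRep (G i) := fun i => ((P i).comap joinVertex.inlEmb).map (φ i) (hφ i)
  have hQ : ∀ i j, i ≠ j → ∀ v w, Disjoint ((Q i).itv v) ((Q j).itv w) := by
    intro i j hij v w
    rcases lt_or_gt_of_ne (hinj.ne hij) with h | h
    · exact disjoint_left.2 fun x hx hx' => (hsep i j h _ _).not_ge (hx'.1.trans hx.2)
    · exact disjoint_left.2 fun x hx hx' => (hsep j i h _ _).not_ge (hx.1.trans hx'.2)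
  have ha : ∀ i ≠ s, ∀ x, φ s ((P s).l (inr ())) < φ i x := fun i hi =>
    hsep s i (hs i hi) _
  have hb : ∀ i ≠ t, ∀ x, φ i x < φ t ((P t).r (inr ())) := fun i hi x =>
    hsep i t (ht i hi) x _
  have hmeet : ∀ y, ((IntervalRep.sigma Q hQ).itv y ∩
      Icc (φ s ((P s).l (inr ()))) (φ t ((P t).r (inr ())))).Nonempty := by
    rintro ⟨i, v⟩
    obtain ⟨z, hzv, hzu⟩ := ((P i).adj_iff (inl v) (inr ()) (by simp)).1 (by simp)
    refine ⟨φ i z, ⟨(hφ i).monotone hzv.1, (hφ i).monotone hzv.2⟩, ?_, ?_⟩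
    · rcases eq_or_ne i s with rfl | hi
      exacts [(hφ i).monotone hzu.1, (ha i hi z).le]
    · rcases eq_or_ne i t with rfl | hi
      exacts [(hφ i).monotone hzu.2, (hb i hi z).le]
  have hab := (ha t hst.symm ((P t).r (inr ()))).le
  refine ⟨(IntervalRep.sigma Q hQ).withApex _ _ hab hmeet, ?_⟩
  rintro i (v | ⟨⟩) (w | ⟨⟩) h
  · exact ((hφ i).Icc_ssubset_Icc_iff ((P i).le _)).1 h
  · replace h : Icc (φ i ((P i).l (inl v))) (φ i ((P i).r (inl v))) ⊂
        Icc (φ s ((P s).l (inr ()))) (φ t ((P t).r (inr ()))) := h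
    obtain ⟨hl, hr⟩ := (Icc_subset_Icc_iff ((hφ i).monotone ((P i).le _))).1 h.subset
    refine (Icc_ssubset_Icc_iff ((P i).le _)).2 ⟨?_, ?_, ?_⟩
    · rcases eq_or_ne i s with rfl | hi
      exacts [(hφ i).le_iff_le.1 hl, (hleft i hi v).le]
    · rcases eq_or_ne i t with rfl | hi
      exacts [(hφ i).le_iff_le.1 hr, (hright i hi v).le]
    · rcases eq_or_ne i s with rfl | hi
      exacts [.inr (hright i hst v), .inl (hleft i hi v)]
  · replace h : Icc (φ s ((P s).l (inr ()))) (φ t ((P t).r (inr ()))) ⊂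
        Icc (φ i ((P i).l (inl w))) (φ i ((P i).r (inl w))) := h
    obtain ⟨hl, hr⟩ := (Icc_subset_Icc_iff hab).1 h.subset
    rcases eq_or_ne i s with rfl | hi
    exacts [absurd hr (hb i hst _).not_ge, absurd hl (ha i hi _).not_ge]
  · exact absurd h (ssubset_irrefl _)

theorem exists_rep_nesting_le_max [∀ i, Finite (V i)] (hconn : ∀ i, (G i).Connected)
    (hG : ∀ i, IsIntervalGraph (G i)) {s t : Fin p} (hst : s ≠ t) :
    ∃ R : IntervalRep (joinVertex (sigmaGraph G)), R.nesting ≤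
      max (max (nu (Gbeta (G s))) (nu (Gbeta (G t))))
        ((Finset.univ \ {s, t}).sup fun i => nu (G i) + 1) := by
  set M := max (max (nu (Gbeta (G s))) (nu (Gbeta (G t))))
    ((Finset.univ \ {s, t}).sup fun i => nu (G i) + 1)
  have hcone : ∀ i, ∃ P : IntervalRep (joinVertex (G i)),
      (i ≠ t → ∀ v, P.r (inl v) < P.r (inr ())) ∧
      (i ≠ s → ∀ v, P.l (inr ()) < P.l (inl v)) ∧ P.nesting ≤ M := by
    intro i
    rcases eq_or_ne i s with rfl | his
    · obtain ⟨Rβ, hRβ⟩ := (hG i).Gbeta.exists_nesting_eq_nu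
      obtain ⟨P, hP, hPn⟩ := Rβ.exists_cone_rep_of_Gbeta (hconn i).preconnected
      exact ⟨P, fun _ => hP, fun h => absurd rfl h,
        hPn.trans (hRβ ▸ (le_max_left _ _).trans (le_max_left _ _))⟩
    rcases eq_or_ne i t with rfl | hit
    · obtain ⟨Rβ, hRβ⟩ := (hG i).Gbeta.exists_nesting_eq_nu
      obtain ⟨P, hP, hPn⟩ := Rβ.exists_cone_rep_of_Gbeta (hconn i).preconnected
      exact ⟨P.reflect, fun h => absurd rfl h, fun _ v => neg_lt_neg (hP v),
        P.nesting_reflect_le.trans (hPn.trans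
          (hRβ ▸ (le_max_right _ _).trans (le_max_left _ _)))⟩
    · obtain ⟨R, hR⟩ := (hG i).exists_nesting_eq_nu
      obtain ⟨P, hl, hr, hPn⟩ := R.exists_cone_rep
      refine ⟨P, fun _ => hr, fun _ => hl, hPn.trans ?_⟩
      rw [hR]
      exact (Finset.le_sup (f := fun i => nu (G i) + 1) (by simp [his, hit])).trans
        (le_max_right _ _)
  choose P hPr hPl hPn using hcone
  obtain ⟨R, hR⟩ := exists_rep_of_cones hst P hPr hPl
  have : Nonempty (Fin p) := ⟨s⟩
  exact ⟨R, R.nesting_le_of_cones P hR hPn⟩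

end Cones

lemma exists_ne_pair_of_subsingleton {α : Type*} [Nontrivial α] {L R : α → Prop}
    (hL : {i | L i}.Subsingleton) (hR : {i | R i}.Subsingleton) (hLR : ∀ i, L i → ¬ R i) :
    ∃ s t, s ≠ t ∧ (∀ i, L i → i = s) ∧ (∀ i, R i → i = t) := by
  by_cases hl : ∃ s, L s
  · obtain ⟨s, hs⟩ := hl
    by_cases hr : ∃ t, R t
    · obtain ⟨t, ht⟩ := hr
      exact ⟨s, t, fun h => hLR s hs (h ▸ ht), fun i hi => hL hi hs,
        fun i hi => hR hi ht⟩
    · obtain ⟨t, hts⟩ := exists_ne s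
      exact ⟨s, t, hts.symm, fun i hi => hL hi hs, fun i hi => absurd ⟨i, hi⟩ hr⟩
  · by_cases hr : ∃ t, R t
    · obtain ⟨t, ht⟩ := hr
      obtain ⟨s, hst⟩ := exists_ne t
      exact ⟨s, t, hst, fun i hi => absurd ⟨i, hi⟩ hl, fun i hi => hR hi ht⟩
    · obtain ⟨s, t, hst⟩ := exists_pair_ne α
      exact ⟨s, t, hst, fun i hi => absurd ⟨i, hi⟩ hl, fun i hi => absurd ⟨i, hi⟩ hr⟩

section Sticking

variable {p : ℕ} {V : Fin p → Type*} {G : ∀ i, SimpleGraph (V i)}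

namespace IntervalRep

variable (R : IntervalRep (joinVertex (sigmaGraph G)))

/-- Sticking out on the right is `R.reflect.SticksOutLeft i`. -/
def SticksOutLeft (i : Fin p) : Prop := ∃ v, R.l (inl ⟨i, v⟩) < R.l (inr ())

lemma disjoint_itv_of_ne {i j : Fin p} (hij : i ≠ j) (v : V i) (w : V j) :
    Disjoint (R.itv (inl ⟨i, v⟩)) (R.itv (inl ⟨j, w⟩)) := by
  rw [disjoint_iff_inter_eq_empty, ← not_nonempty_iff_eq_empty, ← R.adj_iff_itv (by simp [hij])]
  simpa using sigmaGraph_not_adj_of_ne hij v w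

lemma exists_mem_itv_apex (i : Fin p) (v : V i) :
    ∃ c, c ∈ R.itv (inl ⟨i, v⟩) ∧ c ∈ R.itv (inr ()) :=
  (R.adj_iff (inl ⟨i, v⟩) (inr ()) (by simp)).1 (by simp)

variable {R}

lemma SticksOutLeft.eq {i j : Fin p} (hi : R.SticksOutLeft i) (hj : R.SticksOutLeft j) :
    i = j := by
  have hmem : ∀ k, R.SticksOutLeft k → ∃ v, R.l (inr ()) ∈ R.itv (inl ⟨k, v⟩) := by
    rintro k ⟨v, hv⟩
    obtain ⟨c, hcv, hcu⟩ := R.exists_mem_itv_apex k v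
    exact ⟨v, hv.le, hcu.1.trans hcv.2⟩
  by_contra hij
  obtain ⟨v, hv⟩ := hmem i hi
  obtain ⟨w, hw⟩ := hmem j hj
  exact (R.disjoint_itv_of_ne hij v w).ne_of_mem hv hw rfl

/-- The intervals of component `i` cover a point left of `I(w)` but not the point where
component `j` meets `I(w)`. -/
lemma SticksOutLeft.r_lt [∀ i, Nonempty (V i)] {i j : Fin p} (hi : R.SticksOutLeft i)
    (hconn : (G i).Preconnected) (hji : j ≠ i) (v : V i) : R.r (inl ⟨i, v⟩) < R.r (inr ()) := by
  obtain ⟨v₀, hv₀⟩ := hi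
  obtain ⟨w⟩ := ‹∀ i, Nonempty (V i)› j
  obtain ⟨c, hcw, hcu⟩ := R.exists_mem_itv_apex j w
  have hc : ∀ v, c ∉ (R.comap ((coneEmb G i).comp joinVertex.inlEmb)).itv v := fun v hv =>
    (R.disjoint_itv_of_ne hji.symm v w).ne_of_mem hv hcw rfl
  rcases forall_r_lt_or_forall_lt_l _ hconn hc with h | h
  · exact (h v).trans_le hcu.2
  · exact absurd (h v₀) (hv₀.trans_le hcu.1).not_gt

variable [∀ i, Finite (V i)] [∀ i, Nonempty (V i)]

lemma nu_add_one_le_nesting {i j : Fin p} (hl : ¬ R.SticksOutLeft i)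
    (hr : ¬ R.reflect.SticksOutLeft i) (hji : j ≠ i) : nu (G i) + 1 ≤ R.nesting := by
  obtain ⟨w⟩ := ‹∀ i, Nonempty (V i)› j
  obtain ⟨c, hcw, hcu⟩ := R.exists_mem_itv_apex j w
  set P := R.comap (coneEmb G i)
  have hsub : ∀ v, P.itv (inl v) ⊂ P.itv (inr ()) := fun v =>
    (Icc_subset_Icc (le_of_not_gt fun h => hl ⟨v, h⟩)
      (le_of_not_gt fun h => hr ⟨v, neg_lt_neg h⟩)).ssubset_of_not_subset fun h =>
        (R.disjoint_itv_of_ne hji.symm v w).ne_of_mem (h hcu) hcw rfl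
  calc nu (G i) + 1 ≤ (P.comap joinVertex.inlEmb).nesting + 1 := by
        gcongr; exact nu_le_nesting _
    _ ≤ P.nesting := P.nesting_comap_inl_add_one_le hsub
    _ ≤ R.nesting := R.nesting_comap_le _

lemma nu_Gbeta_le_nesting_of_not_sticksOutRight {i j : Fin p}
    (hr : ¬ R.reflect.SticksOutLeft i) (hconn : (G i).Preconnected)
    (hG : IsIntervalGraph (G i)) (hji : j ≠ i) : nu (Gbeta (G i)) ≤ R.nesting := by
  by_cases hl : R.SticksOutLeft i
  · exact (nu_Gbeta_le_nesting (R.comap (coneEmb G i)) (hl.r_lt hconn hji)).trans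
      (R.nesting_comap_le _)
  · exact hG.nu_Gbeta_le.trans (R.nu_add_one_le_nesting hl hr hji)

end IntervalRep

theorem exists_max_le_nesting [∀ i, Finite (V i)] [∀ i, Nonempty (V i)] (hp : 2 ≤ p)
    (hconn : ∀ i, (G i).Connected) (hG : ∀ i, IsIntervalGraph (G i))
    (R : IntervalRep (joinVertex (sigmaGraph G))) :
    ∃ s t : Fin p, s ≠ t ∧ max (max (nu (Gbeta (G s))) (nu (Gbeta (G t))))
      ((Finset.univ \ {s, t}).sup fun i => nu (G i) + 1) ≤ R.nesting := by
  have : Nontrivial (Fin p) := Fin.nontrivial_iff_two_le.2 hp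
  obtain ⟨s, t, hst, hs, ht⟩ := exists_ne_pair_of_subsingleton
    (L := R.SticksOutLeft) (R := R.reflect.SticksOutLeft) (fun _ hi _ hj => hi.eq hj)
    (fun _ hi _ hj => hi.eq hj) fun i hl ⟨v, hv⟩ => by
      obtain ⟨j, hji⟩ := exists_ne i
      exact (hl.r_lt (hconn i).preconnected hji v).not_gt (neg_lt_neg_iff.1 hv)
  refine ⟨s, t, hst, max_le (max_le ?_ ?_) (Finset.sup_le fun i hi => ?_)⟩
  · exact R.nu_Gbeta_le_nesting_of_not_sticksOutRight (fun h => hst (ht s h))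
      (hconn s).preconnected (hG s) hst.symm
  · refine (R.reflect.nu_Gbeta_le_nesting_of_not_sticksOutRight ?_ (hconn t).preconnected
      (hG t) hst).trans R.nesting_reflect_le
    rw [IntervalRep.reflect_reflect]
    exact fun h => hst (hs t h).symm
  · simp only [Finset.mem_sdiff, Finset.mem_univ, Finset.mem_insert, Finset.mem_singleton,
      true_and, not_or] at hi
    exact R.nu_add_one_le_nesting (fun h => hi.1 (hs i h)) (fun h => hi.2 (ht i h)) (Ne.symm hi.1)

end Sticking

/-- for nonempty connected interval graphs `G₁, …, G_p` (`p ≥ 2`) and `G`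
their disjoint union plus a universal vertex `w`,
`ν(G) = min_{s ≠ t} max({ν((G_s)_β), ν((G_t)_β)} ∪ {ν(G_i) + 1 : i ∉ {s,t}})`. -/
theorem stmt_13 {p : ℕ} (hp : 2 ≤ p) {V : Fin p → Type*} [∀ i, Fintype (V i)]
    [∀ i, Nonempty (V i)] (G : ∀ i, SimpleGraph (V i))
    (hconn : ∀ i, (G i).Connected) (hG : ∀ i, IsIntervalGraph (G i)) :
    nu (joinVertex (sigmaGraph G)) =
      sInf {m : ℕ | ∃ s t : Fin p, s ≠ t ∧
        m = max (max (nu (Gbeta (G s))) (nu (Gbeta (G t))))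
          ((Finset.univ \ {s, t}).sup fun i => nu (G i) + 1)} := by
  have : Nontrivial (Fin p) := Fin.nontrivial_iff_two_le.2 hp
  obtain ⟨s₀, t₀, hst₀⟩ := exists_pair_ne (Fin p)
  apply le_antisymm
  · refine le_csInf ⟨_, s₀, t₀, hst₀, rfl⟩ ?_
    rintro _ ⟨s, t, hst, rfl⟩
    obtain ⟨R, hR⟩ := exists_rep_nesting_le_max hconn hG hst
    exact (nu_le_nesting R).trans hR
  · obtain ⟨R₀, -⟩ := exists_rep_nesting_le_max hconn hG hst₀
    obtain ⟨R, hR⟩ := IsIntervalGraph.exists_nesting_eq_nu (Nonempty.intro R₀)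
    obtain ⟨s, t, hst, h⟩ := exists_max_le_nesting hp hconn hG R
    rw [← hR]
    exact le_trans (Nat.sInf_le ⟨s, t, hst, rfl⟩) h
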